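/- arXiv:1601.06249 — 5 statements merged into one kernel-verified Lean document; each statement's English description precedes it below -/
import Mathlib

section
/- Let a, b be positive integers and let λ = (λ₁ ≥ λ₂ ≥ ... ≥ λ_b) be a partition with b nonnegative parts, each part at most a. Let λ' denote the conjugate partition of λ viewed inside the b × a rectangle (so λ' has a nonnegative parts, each at most b). Writing δ_n for the sequence (0, 1, ..., n−1), the multiset of entries of the concatenation of (λ + δ_b) with δ_a equals the multiset of entries of the concatenation of (λ' + δ_a) with δ_b, where addition of sequences is coordinatewise. -/
/-!
Both sides are compared through the multiset `D` of the numbers `i + j` over the cells `(i, j)`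
of the Young diagram of `λ` (0-indexed). Row `i` contributes the interval `[i, i + λᵢ)`, and
`[i, i + λᵢ) + {i + λᵢ} = {i} + [i + 1, i + λᵢ + 1)`; summing over the rows gives
`D + (λ + δ_b) = δ_b + (D + 1)`. Reading the diagram by columns gives the same `D`, so also
`D + (λ' + δ_a) = δ_a + (D + 1)`, and adding `δ_a`, resp. `δ_b`, and cancelling `D` proves the claim.
-/

open Finset

lemma Multiset.map_range_add_singleton (i k : ℕ) :
    (Multiset.range k).map (i + ·) + {k + i} = {i} + (Multiset.range k).map (i + · + 1) := by
  have h : (List.range k).map (i + ·) ++ [i + k] = i :: (List.range k).map (i + · + 1) := by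
    have := congrArg (List.map (i + ·))
      ((List.range_succ (n := k)).symm.trans List.range_succ_eq_map)
    simpa [Function.comp_def, add_assoc] using this
  rw [← Multiset.coe_range, Multiset.map_coe, Multiset.map_coe, add_comm k i,
    Multiset.singleton_add]
  exact congrArg (fun s : List ℕ => (s : Multiset ℕ)) h

lemma Finset.sum_singleton_eq_map_val {α β : Type*} (s : Finset α) (g : α → β) :
    ∑ x ∈ s, ({g x} : Multiset β) = s.val.map g := by
  rw [Finset.sum_eq_multiset_sum, ← Multiset.sum_map_singleton (s.val.map g), Multiset.map_map]
  rfl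

theorem Finset.filter_range_eq_range_card {p : ℕ → Prop} [DecidablePred p] {n : ℕ}
    (hp : ∀ i j, i ≤ j → j < n → p j → p i) :
    (range n).filter p = range ((range n).filter p).card := by
  induction n with
  | zero => simp
  | succ n ih =>
    by_cases hn : p n
    · rw [filter_true_of_mem fun i hi => hp i n (Nat.lt_succ_iff.mp (mem_range.mp hi))
        n.lt_succ_self hn, card_range]
    · rw [range_add_one, filter_insert, if_neg hn]
      exact ih fun i j hij hj => hp i j hij (by omega)

lemma Finset.card_filter_Icc_one (b : ℕ) (p : ℕ → Prop) [DecidablePred p] :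
    ((Icc 1 b).filter p).card = ((range b).filter (fun i => p (i + 1))).card := by
  rw [← Ico_add_one_right_eq_Icc, range_eq_Ico, ← zero_add 1, ← map_add_right_Ico, filter_map,
    card_map]
  rfl

def cellDiagonals (f : ℕ → ℕ) (n : ℕ) : Multiset ℕ :=
  ∑ i ∈ range n, (Multiset.range (f i)).map (i + ·)

theorem cellDiagonals_add_map (f : ℕ → ℕ) (n : ℕ) :
    cellDiagonals f n + (range n).val.map (fun i => f i + i)
      = (range n).val + (cellDiagonals f n).map (· + 1) := by
  induction n with
  | zero => simp [cellDiagonals]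
  | succ n ih =>
    have hrow := Multiset.map_range_add_singleton n (f n)
    simp only [cellDiagonals, sum_range_succ, range_val, Multiset.range_succ, Multiset.map_cons,
      Multiset.map_add] at ih ⊢
    rw [← Multiset.singleton_add, ← Multiset.singleton_add]
    calc _ = (∑ i ∈ range n, (Multiset.range (f i)).map (i + ·))
            + (Multiset.range n).map (fun i => f i + i)
            + ((Multiset.range (f n)).map (n + ·) + {f n + n}) := by abel
      _ = _ := by rw [ih, hrow, Multiset.map_map]; abel

theorem cellDiagonals_eq_sum_ite {f : ℕ → ℕ} {n m : ℕ} (hf : ∀ i < n, f i ≤ m) :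
    cellDiagonals f n = ∑ i ∈ range n, ∑ j ∈ range m, if j < f i then {i + j} else 0 := by
  refine sum_congr rfl fun i hi => ?_
  have hrow : (range m).filter (· < f i) = range (f i) := by
    ext j
    have := hf i (mem_range.mp hi)
    simp only [mem_filter, mem_range]
    omega
  rw [← sum_filter, hrow, sum_singleton_eq_map_val]
  rfl

theorem cellDiagonals_conj {f : ℕ → ℕ} {n m : ℕ} (hf : ∀ i < n, f i ≤ m)
    (hanti : ∀ i j, i ≤ j → j < n → f j ≤ f i) :
    cellDiagonals (fun j => ((range n).filter (fun i => j < f i)).card) m = cellDiagonals f n := by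
  have hcol (j i : ℕ) (hi : i < n) : i < ((range n).filter (fun i => j < f i)).card ↔ j < f i := by
    rw [← mem_range, ← filter_range_eq_range_card fun i i' hii' hi' h => h.trans_le
      (hanti i i' hii' hi'), mem_filter, mem_range]
    exact and_iff_right hi
  rw [cellDiagonals_eq_sum_ite (m := n) fun j _ => (card_filter_le _ _).trans (card_range n).le,
    cellDiagonals_eq_sum_ite hf, sum_comm]
  refine sum_congr rfl fun i hi => sum_congr rfl fun j _ => ?_
  simp only [hcol j i (mem_range.mp hi)]
  rw [add_comm]

theorem stmt_0_general (a b : ℕ) (l : ℕ → ℕ)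
    (hmono : ∀ i j, 1 ≤ i → i ≤ j → j ≤ b → l j ≤ l i)
    (hbound : ∀ i, 1 ≤ i → i ≤ b → l i ≤ a) :
    ((Finset.range b).val.map (fun i => l (i + 1) + i))
      + ((Finset.range a).val.map (fun j => j))
    = ((Finset.range a).val.map
        (fun j => ((Finset.Icc 1 b).filter (fun i => j + 1 ≤ l i)).card + j))
      + ((Finset.range b).val.map (fun i => i)) := by
  set f : ℕ → ℕ := fun i => l (i + 1)
  have hconj : cellDiagonals (fun j => ((Icc 1 b).filter (fun i => j + 1 ≤ l i)).card) a
      = cellDiagonals f b := by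
    simp only [card_filter_Icc_one, Nat.add_one_le_iff]
    exact cellDiagonals_conj (fun i hi => hbound (i + 1) (by omega) hi)
      fun i j hij hj => hmono (i + 1) (j + 1) (by omega) (by omega) hj
  have hrows := cellDiagonals_add_map f b
  have hcols := cellDiagonals_add_map (fun j => ((Icc 1 b).filter (fun i => j + 1 ≤ l i)).card) a
  rw [hconj] at hcols
  simp only [Multiset.map_id']
  apply add_left_cancel (a := cellDiagonals f b)
  rw [← add_assoc, ← add_assoc, hrows, hcols]
  abel

/-- Lemma on partitions.
`l` (1-indexed) is a partition with `b` nonnegative parts, each at most `a`.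
The conjugate in the `b × a` rectangle has `j`-th part `#{i ∈ [1,b] : l i ≥ j}`.
The multiset of entries of `(λ + δ_b) ∪ δ_a` equals that of `(λ' + δ_a) ∪ δ_b`. -/
theorem stmt_0 (a b : ℕ) (ha : 0 < a) (hb : 0 < b) (l : ℕ → ℕ)
    (hmono : ∀ i j, 1 ≤ i → i ≤ j → j ≤ b → l j ≤ l i)
    (hbound : ∀ i, 1 ≤ i → i ≤ b → l i ≤ a) :
    ((Finset.range b).val.map (fun i => l (i + 1) + i))
      + ((Finset.range a).val.map (fun j => j))
    = ((Finset.range a).val.map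
        (fun j => ((Finset.Icc 1 b).filter (fun i => j + 1 ≤ l i)).card + j))
      + ((Finset.range b).val.map (fun i => i)) :=
  stmt_0_general a b l hmono hbound
end

section
/- The number of parking functions on n cars is (n+1)^{n-1}, and the number of preference functions on n cars is n^n. -/
/-!
Pollak's circle argument. Let the `n` cars choose among `n + 1` spots on a circle, i.e. take
`g : Fin n → ZMod (n + 1)`; adding a constant to `g` splits these `(n + 1) ^ n` functions into
orbits of size `n + 1`. The sequence `x ↦ #g⁻¹(x) - 1` sums to `-1`, and `g` is a parking function
exactly when its prefix sums starting from spot `0` are nonnegative. By the cycle lemma, exactly one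
cyclic shift of an integer sequence with sum `-1` has nonnegative prefix sums, so every orbit
contains exactly one parking function.
-/

open Finset

namespace ZMod

variable {N : ℕ}

def CyclicPrefixSumsNonneg (a : ZMod N → ℤ) (s : ZMod N) : Prop :=
  ∀ m < N, 0 ≤ ∑ j ∈ range m, a (s + j)

def prefixSum (a : ZMod N → ℤ) (t : ℕ) : ℤ :=
  ∑ j ∈ range t, a j

theorem sum_range_add_eq_prefixSum_sub (a : ZMod N → ℤ) (t m : ℕ) :
    ∑ j ∈ range m, a (t + j) = prefixSum a (t + m) - prefixSum a t := by
  simp [prefixSum, sum_range_add]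

variable [NeZero N]

theorem sum_range_natCast {M : Type*} [AddCommMonoid M] (f : ZMod N → M) :
    ∑ j ∈ range N, f j = ∑ x, f x :=
  sum_nbij' (↑) val (fun _ _ => mem_univ _) (fun x _ => mem_range.2 x.val_lt)
    (fun _ hj => val_natCast_of_lt (mem_range.1 hj)) (fun x _ => natCast_zmod_val x)
    (fun _ _ => rfl)

theorem sum_range_add_eq_sum_univ (a : ZMod N → ℤ) (s : ZMod N) :
    ∑ j ∈ range N, a (s + j) = ∑ x, a x := by
  rw [sum_range_natCast fun x => a (s + x)]
  exact Equiv.sum_comp (Equiv.addLeft s) a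

variable {a : ZMod N → ℤ}

theorem prefixSum_add_period (ha : ∑ x, a x = -1) (t : ℕ) :
    prefixSum a (t + N) = prefixSum a t - 1 := by
  have h := sum_range_add_eq_prefixSum_sub a t N
  rw [sum_range_add_eq_sum_univ, ha] at h
  linarith

theorem cyclicPrefixSumsNonneg_iff (s : ZMod N) :
    CyclicPrefixSumsNonneg a s ↔ ∀ m < N, prefixSum a s.val ≤ prefixSum a (s.val + m) := by
  refine forall₂_congr fun m _ => ?_
  rw [← natCast_zmod_val s, sum_range_add_eq_prefixSum_sub, val_natCast_of_lt s.val_lt, sub_nonneg]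

theorem exists_cyclicPrefixSumsNonneg (ha : ∑ x, a x = -1) :
    ∃ s, CyclicPrefixSumsNonneg a s := by
  -- `N * prefixSum a t + t` is `N`-periodic; a minimiser is a valid starting point, the `+ t`
  -- breaking ties in favour of the earliest one.
  set φ : ℕ → ℤ := fun t => N * prefixSum a t + t
  have hφ : Function.Periodic φ N := fun t => by
    simp only [φ, prefixSum_add_period ha]
    push_cast
    ring
  obtain ⟨t₀, ht₀, hmin⟩ := (range N).exists_min_image φ ⟨0, mem_range.2 (NeZero.pos N)⟩
  have hmin' : ∀ t, φ t₀ ≤ φ t := fun t =>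
    hφ.map_mod_nat t ▸ hmin _ (mem_range.2 (Nat.mod_lt _ (NeZero.pos N)))
  refine ⟨t₀, (cyclicPrefixSumsNonneg_iff _).2 fun m hm => ?_⟩
  rw [val_natCast_of_lt (mem_range.1 ht₀)]
  have h := hmin' (t₀ + m)
  simp only [φ] at h
  push_cast at h
  have hlt : (N : ℤ) * (prefixSum a t₀ - prefixSum a (t₀ + m)) < N * 1 := by
    have : (m : ℤ) < N := by exact_mod_cast hm
    linarith
  have := lt_of_mul_lt_mul_left hlt (Int.natCast_nonneg N)
  linarith

theorem not_val_lt_of_cyclicPrefixSumsNonneg (ha : ∑ x, a x = -1) {s s' : ZMod N}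
    (hs : CyclicPrefixSumsNonneg a s) (hs' : CyclicPrefixSumsNonneg a s') : ¬ s.val < s'.val := by
  intro h
  have hs'N := s'.val_lt
  rw [cyclicPrefixSumsNonneg_iff] at hs hs'
  have h₁ := hs (s'.val - s.val) (by omega)
  have h₂ := hs' (s.val + N - s'.val) (by omega)
  rw [Nat.add_sub_cancel' h.le] at h₁
  rw [show s'.val + (s.val + N - s'.val) = s.val + N by omega, prefixSum_add_period ha] at h₂
  linarith

theorem existsUnique_cyclicPrefixSumsNonneg (ha : ∑ x, a x = -1) :
    ∃! s, CyclicPrefixSumsNonneg a s := by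
  obtain ⟨s, hs⟩ := exists_cyclicPrefixSumsNonneg ha
  refine ⟨s, hs, fun s' hs' => val_injective N (le_antisymm ?_ ?_)⟩
  · exact not_lt.1 (not_val_lt_of_cyclicPrefixSumsNonneg ha hs hs')
  · exact not_lt.1 (not_val_lt_of_cyclicPrefixSumsNonneg ha hs' hs)

theorem apply_sub_one_neg_of_cyclicPrefixSumsNonneg (ha : ∑ x, a x = -1) {s : ZMod N}
    (hs : CyclicPrefixSumsNonneg a s) : a (s - 1) < 0 := by
  obtain ⟨k, rfl⟩ := Nat.exists_eq_succ_of_ne_zero (NeZero.ne N)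
  have h := sum_range_add_eq_sum_univ a s
  rw [sum_range_succ, ha] at h
  have hk : ((k : ℕ) : ZMod (k + 1)) = -1 :=
    eq_neg_of_add_eq_zero_left (by exact_mod_cast natCast_self (k + 1))
  rw [hk, ← sub_eq_add_neg] at h
  linarith [hs k k.lt_succ_self]

end ZMod

open ZMod

section ParkingFunctions

variable {ι : Type*} [Fintype ι] {N : ℕ}

def spotExcess (g : ι → ZMod N) (x : ZMod N) : ℤ :=
  #{i | g i = x} - 1

theorem sum_spotExcess [NeZero N] (g : ι → ZMod N) :
    ∑ x, spotExcess g x = Fintype.card ι - N := by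
  rw [← card_univ, card_eq_sum_card_fiberwise fun i _ => mem_univ (g i)]
  simp [spotExcess, sum_sub_distrib]

theorem spotExcess_sub_const (g : ι → ZMod N) (c x : ZMod N) :
    spotExcess (fun i => g i - c) x = spotExcess g (x + c) := by
  simp only [spotExcess, sub_eq_iff_eq_add]

theorem cyclicPrefixSumsNonneg_spotExcess_sub_const (g : ι → ZMod N) (c s : ZMod N) :
    CyclicPrefixSumsNonneg (spotExcess fun i => g i - c) s ↔
      CyclicPrefixSumsNonneg (spotExcess g) (s + c) := by
  simp only [CyclicPrefixSumsNonneg, spotExcess_sub_const, add_right_comm]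

variable {n : ℕ}

theorem sum_spotExcess_fin (g : Fin n → ZMod (n + 1)) : ∑ x, spotExcess g x = -1 := by
  rw [sum_spotExcess, Fintype.card_fin]
  push_cast
  ring

theorem card_mul_card_cyclicPrefixSumsNonneg_zero :
    (n + 1) * Nat.card {g : Fin n → ZMod (n + 1) // CyclicPrefixSumsNonneg (spotExcess g) 0}
      = (n + 1) ^ n := by
  let Φ : ZMod (n + 1) × {g : Fin n → ZMod (n + 1) // CyclicPrefixSumsNonneg (spotExcess g) 0}
      → (Fin n → ZMod (n + 1)) := fun p i => p.2.1 i + p.1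
  have hΦ : Function.Bijective Φ := by
    refine Function.bijective_iff_existsUnique _ |>.2 fun h => ?_
    have hgood (c : ZMod (n + 1)) :
        CyclicPrefixSumsNonneg (spotExcess fun i => h i - c) 0 ↔
          CyclicPrefixSumsNonneg (spotExcess h) c := by
      rw [cyclicPrefixSumsNonneg_spotExcess_sub_const, zero_add]
    obtain ⟨s, hs, huniq⟩ := existsUnique_cyclicPrefixSumsNonneg (sum_spotExcess_fin h)
    refine ⟨(s, ⟨fun i => h i - s, (hgood s).2 hs⟩), funext fun i => sub_add_cancel _ _, ?_⟩
    rintro ⟨c, g, hg⟩ rfl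
    obtain rfl : c = s := huniq c ((hgood c).1 (by simpa [Φ] using hg))
    simp [Φ]
  have h := Nat.card_eq_of_bijective Φ hΦ
  rwa [Nat.card_prod, Nat.card_fun, Nat.card_zmod, Nat.card_fin] at h

def IsParkingFunction (f : Fin n → Fin n) : Prop :=
  ∀ k : Fin n, (k : ℕ) + 1 ≤ #{i | f i ≤ k}

theorem isParkingFunction_iff (f : Fin n → Fin n) :
    IsParkingFunction f ↔ ∀ m < n + 1, m ≤ #{i | (f i : ℕ) < m} := by
  have hle (k : Fin n) (i : Fin n) : f i ≤ k ↔ (f i : ℕ) < k + 1 := by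
    rw [Fin.le_def, Nat.lt_succ_iff]
  refine ⟨fun hf m hm => ?_, fun hf k => ?_⟩
  · obtain _ | k := m
    · exact Nat.zero_le _
    · simpa only [hle ⟨k, by omega⟩] using hf ⟨k, by omega⟩
  · simpa only [hle k] using hf (k + 1) (by omega)

theorem sum_spotExcess_natCast (f : Fin n → Fin n) {m : ℕ} (hm : m ≤ n + 1) :
    ∑ j ∈ range m, spotExcess (fun i => ((f i : ℕ) : ZMod (n + 1))) j
      = #{i | (f i : ℕ) < m} - m := by
  have hfiber (j : ℕ) (hj : j ∈ range m) :
      #{i | ((f i : ℕ) : ZMod (n + 1)) = j} = #{i | (f i : ℕ) = j} := by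
    congr 1
    refine filter_congr fun i _ => ?_
    rw [natCast_eq_natCast_iff', Nat.mod_eq_of_lt (by omega),
      Nat.mod_eq_of_lt (by have := mem_range.1 hj; omega)]
  have hcount := sum_card_fiberwise_eq_card_filter univ (range m) fun i => (f i : ℕ)
  simp only [mem_range] at hcount
  simp only [spotExcess, sum_sub_distrib, sum_const, card_range, nsmul_eq_mul, mul_one]
  rw [← hcount, Nat.cast_sum, sum_congr rfl fun j hj => congrArg Nat.cast (hfiber j hj)]

theorem cyclicPrefixSumsNonneg_natCast_iff (f : Fin n → Fin n) :
    CyclicPrefixSumsNonneg (spotExcess fun i => ((f i : ℕ) : ZMod (n + 1))) 0 ↔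
      IsParkingFunction f := by
  rw [isParkingFunction_iff]
  refine forall₂_congr fun m hm => ?_
  simp only [zero_add, sum_spotExcess_natCast f hm.le, sub_nonneg, Nat.cast_le]

theorem val_lt_of_cyclicPrefixSumsNonneg {g : Fin n → ZMod (n + 1)}
    (hg : CyclicPrefixSumsNonneg (spotExcess g) 0) (i : Fin n) : (g i).val < n := by
  -- the last spot is preferred by no car
  have hlast := apply_sub_one_neg_of_cyclicPrefixSumsNonneg (sum_spotExcess_fin g) hg
  have hne : g i ≠ -1 := by
    intro hi
    rw [zero_sub, spotExcess, sub_neg, Nat.cast_lt_one, card_eq_zero] at hlast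
    exact (eq_empty_iff_forall_notMem.1 hlast) i (mem_filter.2 ⟨mem_univ _, hi⟩)
  have hval : (g i).val ≠ n := fun h => hne (val_injective _ (h.trans (val_neg_one n).symm))
  have := (g i).val_lt
  omega

theorem card_isParkingFunction :
    Nat.card {f : Fin n → Fin n // IsParkingFunction f}
      = Nat.card {g : Fin n → ZMod (n + 1) // CyclicPrefixSumsNonneg (spotExcess g) 0} := by
  refine Nat.card_eq_of_bijective
    (fun f => ⟨fun i => ((f.1 i : ℕ) : ZMod (n + 1)), (cyclicPrefixSumsNonneg_natCast_iff _).2 f.2⟩)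
    ⟨fun f f' h => ?_, fun g => ?_⟩
  · refine Subtype.ext (funext fun i => Fin.ext ?_)
    have h' := congrArg (fun g => (g.1 i).val) h
    simpa only [val_natCast_of_lt (Nat.lt_succ_of_lt (Fin.is_lt _))] using h'
  · let f : Fin n → Fin n := fun i => ⟨(g.1 i).val, val_lt_of_cyclicPrefixSumsNonneg g.2 i⟩
    have hf : (fun i => ((f i : ℕ) : ZMod (n + 1))) = g.1 :=
      funext fun i => natCast_zmod_val (g.1 i)
    exact ⟨⟨f, (cyclicPrefixSumsNonneg_natCast_iff f).1 (hf ▸ g.2)⟩, Subtype.ext hf⟩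

end ParkingFunctions

theorem stmt_6_general (n : ℕ) :
    Nat.card {f : Fin n → Fin n // ∀ k : Fin n,
        (k : ℕ) + 1 ≤ (Finset.univ.filter (fun i => f i ≤ k)).card}
      = (n + 1) ^ (n - 1)
    ∧ Nat.card (Fin n → Fin n) = n ^ n := by
  refine ⟨?_, by rw [Nat.card_fun, Nat.card_fin]⟩
  have h : (n + 1) * Nat.card {f : Fin n → Fin n // IsParkingFunction f} = (n + 1) ^ n := by
    rw [card_isParkingFunction, card_mul_card_cyclicPrefixSumsNonneg_zero]
  cases n with
  | zero => exact (one_mul _).symm.trans h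
  | succ k => exact Nat.eq_of_mul_eq_mul_left (k + 1).succ_pos (h.trans (pow_succ' _ _))

/-- There are `(n+1)^(n-1)` parking functions and `n^n` preference
functions on `n` cars. Here `f : Fin n → Fin n` encodes a preference function
(`f i = j` means car `i+1` prefers spot `j+1`), and the parking condition
`|f⁻¹([k])| ≥ k` reads: for every `k : Fin n`, at least `k+1` cars prefer a spot `≤ k+1`. -/
theorem stmt_6 (n : ℕ) (hn : 1 ≤ n) :
    Nat.card {f : Fin n → Fin n // ∀ k : Fin n,
        (k : ℕ) + 1 ≤ (Finset.univ.filter (fun i => f i ≤ k)).card}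
      = (n + 1) ^ (n - 1)
    ∧ Nat.card (Fin n → Fin n) = n ^ n :=
  stmt_6_general n
end

section
/- Let A, B be disjoint nonempty sets partitioning {1,...,n}, with a = |A|, b = |B|. Define λ_i = #{x ∈ A : x < b_i} for b_1 > ... > b_b the elements of B in decreasing order, and λ'_j = #{y ∈ B : y > a_j} for a_1 < ... < a_a the elements of A in increasing order. Then the multiset consisting of {i : 1 ≤ i ≤ a} together with {λ_i + i − 1 : 1 ≤ i ≤ b}, after removing one copy of a, equals the multiset consisting of {j : 1 ≤ j ≤ b} together with {λ'_{a−i+1} + a − i : 1 ≤ i ≤ a}, after removing one copy of b. -/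
namespace Stmt8Aux

/-- The key quantity: number of elements of `A` below `m` plus elements of `B` above `m`. -/
def fw (A B : Finset ℕ) (m : ℕ) : ℕ :=
  (A.filter (· < m)).card + (B.filter (m < ·)).card

lemma icc_val_succ (k : ℕ) :
    (Finset.Icc 1 (k+1)).val = (k+1) ::ₘ (Finset.Icc 1 k).val := by
  rw [← Finset.insert_Icc_right_eq_Icc_add_one (by omega), Finset.insert_val_of_notMem (by simp)]

lemma icc_map_succ (k : ℕ) :
    (Finset.Icc 1 (k+1)).val = 1 ::ₘ (Finset.Icc 1 k).val.map (· + 1) := by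
  induction k with
  | zero => decide
  | succ k ih =>
    conv_lhs => rw [icc_val_succ (k+1), ih]
    conv_rhs => rw [icc_val_succ k]
    rw [Multiset.map_cons, Multiset.cons_swap]

lemma key : ∀ n (A B : Finset ℕ), Disjoint A B → A ∪ B = Finset.Icc 1 n →
    (Finset.Icc 1 A.card).val + B.val.map (fw A B) + {B.card}
      = (Finset.Icc 1 B.card).val + A.val.map (fw A B) + {A.card} := by
  intro n
  induction n with
  | zero =>
    intro A B _ hu
    simp only [Finset.Icc_eq_empty_of_lt (by omega : (0:ℕ) < 1)] at hu
    obtain ⟨hA, hB⟩ := Finset.union_eq_empty.mp hu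
    subst hA; subst hB; rfl
  | succ n ih =>
    intro A B hd hu
    have hmem : n+1 ∈ A ∪ B := by rw [hu]; simp
    have hsub : ∀ m ∈ A ∪ B, m ≤ n+1 := by
      intro m hm; rw [hu, Finset.mem_Icc] at hm; exact hm.2
    rcases Finset.mem_union.mp hmem with hmA | hmB
    · -- n+1 ∈ A
      set A' := A.erase (n+1) with hA'def
      have hnB : n+1 ∉ B := Finset.disjoint_left.mp hd hmA
      have hu' : A' ∪ B = Finset.Icc 1 n := by
        have h1 : (A ∪ B).erase (n+1) = Finset.Icc 1 n := by
          rw [hu, ← Finset.insert_Icc_right_eq_Icc_add_one (by omega), Finset.erase_insert (by simp)]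
        rw [← h1, Finset.erase_union_distrib, Finset.erase_eq_of_notMem hnB]
      have hd' : Disjoint A' B := hd.mono_left (Finset.erase_subset _ _)
      have hfA : ∀ m, m ≤ n+1 → fw A B m = fw A' B m := by
        intro m hm
        unfold fw
        have : A.filter (· < m) = A'.filter (· < m) := by
          ext x
          simp only [Finset.mem_filter, hA'def, Finset.mem_erase]
          constructor
          · rintro ⟨hx, hlt⟩; exact ⟨⟨by omega, hx⟩, hlt⟩
          · rintro ⟨⟨_, hx⟩, hlt⟩; exact ⟨hx, hlt⟩
        rw [this]
      have hftop : fw A B (n+1) = A'.card := by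
        unfold fw
        have h1 : A.filter (· < n+1) = A' := by
          ext x
          simp only [Finset.mem_filter, hA'def, Finset.mem_erase]
          constructor
          · rintro ⟨hx, hlt⟩; exact ⟨by omega, hx⟩
          · rintro ⟨hne, hx⟩
            have := hsub x (Finset.mem_union_left _ hx); exact ⟨hx, by omega⟩
        have h2 : B.filter (n+1 < ·) = ∅ := by
          ext y
          simp only [Finset.mem_filter, Finset.notMem_empty, iff_false, not_and]
          intro hy
          have := hsub y (Finset.mem_union_right _ hy); omega
        rw [h1, h2]; simp
      have hAval : A.val = (n+1) ::ₘ A'.val := by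
        rw [hA'def, Finset.erase_val, Multiset.cons_erase (by exact hmA)]
      have hcard : A.card = A'.card + 1 := by
        rw [hA'def, Finset.card_erase_of_mem hmA]
        have : 0 < A.card := Finset.card_pos.mpr ⟨n+1, hmA⟩
        omega
      have hBmap : B.val.map (fw A B) = B.val.map (fw A' B) :=
        Multiset.map_congr rfl (fun m hm => hfA m (hsub m (Finset.mem_union_right _ hm)))
      have hAmap : A.val.map (fw A B) = A'.card ::ₘ A'.val.map (fw A' B) := by
        rw [hAval, Multiset.map_cons, hftop]
        congr 1
        exact Multiset.map_congr rfl (fun m hm =>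
          hfA m (hsub m (Finset.mem_union_left _ (Finset.mem_of_mem_erase hm))))
      have IH := ih A' B hd' hu'
      rw [hcard, icc_val_succ, hBmap, hAmap]
      calc ((A'.card+1) ::ₘ (Finset.Icc 1 A'.card).val) + B.val.map (fw A' B) + {B.card}
          = ((Finset.Icc 1 A'.card).val + B.val.map (fw A' B) + {B.card}) + {A'.card+1} := by
            rw [← Multiset.singleton_add]; abel
        _ = ((Finset.Icc 1 B.card).val + A'.val.map (fw A' B) + {A'.card}) + {A'.card+1} := by
            rw [IH]
        _ = (Finset.Icc 1 B.card).val + (A'.card ::ₘ A'.val.map (fw A' B)) + {A'.card+1} := by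
            rw [← Multiset.singleton_add]; abel
    · -- n+1 ∈ B
      set B' := B.erase (n+1) with hB'def
      have hnA : n+1 ∉ A := Finset.disjoint_right.mp hd hmB
      have hu' : A ∪ B' = Finset.Icc 1 n := by
        have h1 : (A ∪ B).erase (n+1) = Finset.Icc 1 n := by
          rw [hu, ← Finset.insert_Icc_right_eq_Icc_add_one (by omega), Finset.erase_insert (by simp)]
        rw [← h1, Finset.erase_union_distrib, Finset.erase_eq_of_notMem hnA]
      have hd' : Disjoint A B' := hd.mono_right (Finset.erase_subset _ _)
      have hsub' : ∀ m ∈ A ∪ B', m ≤ n := by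
        intro m hm; rw [hu', Finset.mem_Icc] at hm; exact hm.2
      have hfB : ∀ m, m ≤ n → fw A B m = fw A B' m + 1 := by
        intro m hm
        have hf : B.filter (m < ·) = insert (n+1) (B'.filter (m < ·)) := by
          ext y
          simp only [Finset.mem_filter, Finset.mem_insert, hB'def, Finset.mem_erase]
          constructor
          · rintro ⟨hy, hlt⟩
            by_cases hy1 : y = n+1
            · exact Or.inl hy1
            · exact Or.inr ⟨⟨hy1, hy⟩, hlt⟩
          · rintro (rfl | ⟨⟨_, hy⟩, hlt⟩)
            · exact ⟨hmB, by omega⟩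
            · exact ⟨hy, hlt⟩
        have hcf : (B.filter (m < ·)).card = (B'.filter (m < ·)).card + 1 := by
          rw [hf, Finset.card_insert_of_notMem (by simp [hB'def])]
        unfold fw; omega
      have hftop : fw A B (n+1) = A.card := by
        unfold fw
        have h1 : A.filter (· < n+1) = A := by
          apply Finset.filter_eq_self.mpr
          intro x hx
          have := hsub x (Finset.mem_union_left _ hx)
          have : x ≠ n+1 := fun h => hnA (h ▸ hx)
          omega
        have h2 : B.filter (n+1 < ·) = ∅ := by
          ext y
          simp only [Finset.mem_filter, Finset.notMem_empty, iff_false, not_and]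
          intro hy
          have := hsub y (Finset.mem_union_right _ hy); omega
        rw [h1, h2]; simp
      have hBval : B.val = (n+1) ::ₘ B'.val := by
        rw [hB'def, Finset.erase_val, Multiset.cons_erase (by exact hmB)]
      have hcard : B.card = B'.card + 1 := by
        rw [hB'def, Finset.card_erase_of_mem hmB]
        have : 0 < B.card := Finset.card_pos.mpr ⟨n+1, hmB⟩
        omega
      have hBmap : B.val.map (fw A B)
          = A.card ::ₘ (B'.val.map (fw A B')).map (· + 1) := by
        rw [hBval, Multiset.map_cons, hftop, Multiset.map_map]
        congr 1
        exact Multiset.map_congr rfl (fun m hm => by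
          exact hfB m (hsub' m (Finset.mem_union_right _ (by exact hm))))
      have hAmap : A.val.map (fw A B) = (A.val.map (fw A B')).map (· + 1) := by
        rw [Multiset.map_map]
        exact Multiset.map_congr rfl (fun m hm =>
          hfB m (hsub' m (Finset.mem_union_left _ hm)))
      have IH := ih A B' hd' hu'
      have IHp := congrArg (Multiset.map (· + 1)) IH
      simp only [Multiset.map_add, Multiset.map_singleton] at IHp
      -- IHp : Ja + S₊ + {b'+1} = Jb' + T₊ + {a+1}
      have hIa : ({A.card + 1} : Multiset ℕ) + (Finset.Icc 1 A.card).val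
          = {1} + (Finset.Icc 1 A.card).val.map (· + 1) := by
        rw [Multiset.singleton_add, Multiset.singleton_add, ← icc_val_succ, icc_map_succ]
      have key2 : (Finset.Icc 1 A.card).val + (B'.val.map (fw A B')).map (· + 1)
            + {B'.card + 1}
          = {1} + (Finset.Icc 1 B'.card).val.map (· + 1)
            + (A.val.map (fw A B')).map (· + 1) := by
        have h : ({A.card + 1} : Multiset ℕ) +
            ((Finset.Icc 1 A.card).val + (B'.val.map (fw A B')).map (· + 1) + {B'.card + 1})
            = {A.card + 1} +
            ({1} + (Finset.Icc 1 B'.card).val.map (· + 1) + (A.val.map (fw A B')).map (· + 1)) := by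
          calc ({A.card + 1} : Multiset ℕ) +
              ((Finset.Icc 1 A.card).val + (B'.val.map (fw A B')).map (· + 1) + {B'.card + 1})
              = (({A.card + 1} : Multiset ℕ) + (Finset.Icc 1 A.card).val)
                  + (B'.val.map (fw A B')).map (· + 1) + {B'.card + 1} := by abel
            _ = ({1} + (Finset.Icc 1 A.card).val.map (· + 1))
                  + (B'.val.map (fw A B')).map (· + 1) + {B'.card + 1} := by rw [hIa]
            _ = {1} + ((Finset.Icc 1 A.card).val.map (· + 1)
                  + (B'.val.map (fw A B')).map (· + 1) + {B'.card + 1}) := by abel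
            _ = {1} + ((Finset.Icc 1 B'.card).val.map (· + 1)
                  + (A.val.map (fw A B')).map (· + 1) + {A.card + 1}) := by rw [IHp]
            _ = {A.card + 1} +
                ({1} + (Finset.Icc 1 B'.card).val.map (· + 1)
                  + (A.val.map (fw A B')).map (· + 1)) := by abel
        exact add_left_cancel h
      rw [hcard, hBmap, hAmap, icc_map_succ]
      calc (Finset.Icc 1 A.card).val
            + (A.card ::ₘ (B'.val.map (fw A B')).map (· + 1)) + {B'.card + 1}
          = ((Finset.Icc 1 A.card).val + (B'.val.map (fw A B')).map (· + 1)
              + {B'.card + 1}) + {A.card} := by rw [← Multiset.singleton_add]; abel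
        _ = ({1} + (Finset.Icc 1 B'.card).val.map (· + 1)
              + (A.val.map (fw A B')).map (· + 1)) + {A.card} := by rw [key2]
        _ = (1 ::ₘ (Finset.Icc 1 B'.card).val.map (· + 1))
              + (A.val.map (fw A B')).map (· + 1) + {A.card} := by
            rw [← Multiset.singleton_add]


lemma countP_sorted (l : List ℕ) (h : l.Pairwise (· < ·)) : ∀ k, k < l.length →
    l.countP (fun y => decide (y < l.getD k 0)) = k ∧
    l.countP (fun y => decide (l.getD k 0 < y)) = l.length - k - 1 := by
  induction l with
  | nil => intro k hk; simp at hk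
  | cons x xs ih =>
    intro k hk
    rw [List.pairwise_cons] at h
    obtain ⟨hx, hxs⟩ := h
    cases k with
    | zero =>
      simp only [List.getD_cons_zero]
      constructor
      · rw [List.countP_eq_zero]
        intro y hy
        rcases List.mem_cons.mp hy with rfl | hy'
        · simp
        · have := hx y hy'; simp; omega
      · rw [List.countP_cons]
        have h1 : xs.countP (fun y => decide (x < y)) = xs.length :=
          List.countP_eq_length.mpr (fun y hy => by simp [hx y hy])
        simp [h1]
    | succ k =>
      have hk' : k < xs.length := by simpa using hk
      have hc : (x :: xs).getD (k+1) 0 = xs.getD k 0 := rfl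
      obtain ⟨h1, h2⟩ := ih hxs k hk'
      have hmem : xs.getD k 0 ∈ xs := by
        rw [List.getD_eq_getElem _ _ hk']
        exact List.getElem_mem _
      have hxc : x < xs.getD k 0 := hx _ hmem
      rw [hc]
      constructor
      · rw [List.countP_cons, h1, if_pos (by simpa using hxc)]
      · have hnc : ¬ (xs.getD k 0 < x) := by omega
        rw [List.countP_cons, h2, if_neg (by simpa using hnc)]
        simp only [List.length_cons]
        omega

lemma card_filter_sort_lt (s : Finset ℕ) (k : ℕ) (hk : k < s.card) :
    (s.filter (· < (s.sort (· ≤ ·)).getD k 0)).card = k := by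
  have hlen : (s.sort (· ≤ ·)).length = s.card := Finset.length_sort _
  have h := (countP_sorted (s.sort (· ≤ ·)) (s.sortedLT_sort.pairwise) k (by omega)).1
  have hval : ((s.sort (· ≤ ·)) : Multiset ℕ) = s.val :=
    (Multiset.coe_eq_coe.mpr (s.sort_perm_toList _)).trans s.coe_toList
  rw [Finset.card_def, Finset.filter_val, ← Multiset.countP_eq_card_filter, ← hval,
    Multiset.coe_countP]
  exact h

lemma card_filter_sort_gt (s : Finset ℕ) (k : ℕ) (hk : k < s.card) :
    (s.filter ((s.sort (· ≤ ·)).getD k 0 < ·)).card = s.card - k - 1 := by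
  have hlen : (s.sort (· ≤ ·)).length = s.card := Finset.length_sort _
  have h := (countP_sorted (s.sort (· ≤ ·)) (s.sortedLT_sort.pairwise) k (by omega)).2
  have hval : ((s.sort (· ≤ ·)) : Multiset ℕ) = s.val :=
    (Multiset.coe_eq_coe.mpr (s.sort_perm_toList _)).trans s.coe_toList
  rw [Finset.card_def, Finset.filter_val, ← Multiset.countP_eq_card_filter, ← hval,
    Multiset.coe_countP]
  rw [h, hlen]

lemma map_range_getD (g : ℕ → ℕ) (l : List ℕ) :
    (Multiset.range l.length).map (fun k => g (l.getD k 0)) = (l.map g : List ℕ) := by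
  have : Multiset.range l.length = ((List.range l.length : List ℕ) : Multiset ℕ) := rfl
  rw [this, Multiset.map_coe, Multiset.coe_eq_coe]
  apply List.Perm.of_eq
  apply List.ext_getElem
  · simp
  · intro i h1 h2
    simp only [List.getElem_map, List.getElem_range]
    rw [List.getD_eq_getElem _ _ (by simpa using h2)]

lemma icc_map_rev (b : ℕ) (g : ℕ → ℕ) :
    (Finset.Icc 1 b).val.map (fun i => g (b - i)) = (Multiset.range b).map g := by
  have hmap : (Finset.Icc 1 b).val.map (fun i => b - i) = Multiset.range b := by
    have n1 : ((Finset.Icc 1 b).val.map (fun i => b - i)).Nodup := by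
      apply Multiset.Nodup.map_on _ (Finset.Icc 1 b).nodup
      intro x hx y hy hxy
      simp only [Finset.mem_val, Finset.mem_Icc] at hx hy
      omega
    rw [Multiset.Nodup.ext n1 (Multiset.nodup_range b)]
    intro x
    simp only [Multiset.mem_map, Finset.mem_val, Finset.mem_Icc, Multiset.mem_range]
    constructor
    · rintro ⟨i, ⟨hi1, hi2⟩, rfl⟩; omega
    · intro hx; exact ⟨b - x, ⟨by omega, by omega⟩, by omega⟩
  calc (Finset.Icc 1 b).val.map (fun i => g (b - i))
      = ((Finset.Icc 1 b).val.map (fun i => b - i)).map g := by rw [Multiset.map_map]; rfl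
    _ = (Multiset.range b).map g := by rw [hmap]


lemma icc_map_rev' (b : ℕ) (F : ℕ → ℕ) (g : ℕ → ℕ) (hF : ∀ i, F i = g (b - i)) :
    (Finset.Icc 1 b).val.map F = (Multiset.range b).map g := by
  rw [Multiset.map_congr rfl (fun i _ => hF i)]
  exact icc_map_rev b g

end Stmt8Aux

open Stmt8Aux in
/-- With `A, B` disjoint nonempty sets partitioning `{1,…,n}`,
`|A| = a`, `|B| = b`, `lam i = #{x ∈ A : x < (i-th largest of B)}` and
`mu j = #{y ∈ B : y > (j-th smallest of A)}`: the multiset `{1,…,a} ∪ {lam i + i − 1 : 1 ≤ i ≤ b}`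
minus one copy of `a` equals the multiset `{1,…,b} ∪ {mu (a−i+1) + (a−i) : 1 ≤ i ≤ a}`
minus one copy of `b`. -/
theorem stmt_8 (n a b : ℕ) (A B : Finset ℕ)
    (hA : A.card = a) (hB : B.card = b) (ha : 0 < a) (hb : 0 < b)
    (hdisj : Disjoint A B) (hunion : A ∪ B = Finset.Icc 1 n)
    (lam mu : ℕ → ℕ)
    (hlam : ∀ i, 1 ≤ i → i ≤ b →
        lam i = (A.filter (fun x => x < (B.sort (· ≤ ·)).getD (b - i) 0)).card)
    (hmu : ∀ j, 1 ≤ j → j ≤ a →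
        mu j = (B.filter (fun y => (A.sort (· ≤ ·)).getD (j - 1) 0 < y)).card) :
    ((Finset.Icc 1 a).val + (Finset.Icc 1 b).val.map (fun i => lam i + i - 1)).erase a
      = ((Finset.Icc 1 b).val
          + (Finset.Icc 1 a).val.map (fun i => mu (a - i + 1) + (a - i))).erase b := by
  subst hA hB
  have hvalB : ((B.sort (· ≤ ·)) : Multiset ℕ) = B.val :=
    (Multiset.coe_eq_coe.mpr (B.sort_perm_toList _)).trans B.coe_toList
  have hvalA : ((A.sort (· ≤ ·)) : Multiset ℕ) = A.val :=
    (Multiset.coe_eq_coe.mpr (A.sort_perm_toList _)).trans A.coe_toList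
  have hlenB : (B.sort (· ≤ ·)).length = B.card := Finset.length_sort _
  have hlenA : (A.sort (· ≤ ·)).length = A.card := Finset.length_sort _
  have h1 : (Finset.Icc 1 B.card).val.map (fun i => lam i + i - 1)
      = B.val.map (fw A B) := by
    have step1 : (Finset.Icc 1 B.card).val.map (fun i => lam i + i - 1)
        = (Finset.Icc 1 B.card).val.map
            (fun i => fw A B ((B.sort (· ≤ ·)).getD (B.card - i) 0)) := by
      apply Multiset.map_congr rfl
      intro i hi
      simp only [Finset.mem_val, Finset.mem_Icc] at hi
      rw [hlam i hi.1 hi.2]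
      unfold fw
      have hr : (B.filter ((B.sort (· ≤ ·)).getD (B.card - i) 0 < ·)).card
          = B.card - (B.card - i) - 1 :=
        card_filter_sort_gt B (B.card - i) (by omega)
      rw [hr]
      have hcf : (A.filter
          (fun x => x < (B.sort (· ≤ ·)).getD (B.card - i) 0)).card
          = (A.filter (· < (B.sort (· ≤ ·)).getD (B.card - i) 0)).card := rfl
      rw [hcf]
      omega
    rw [step1, icc_map_rev' B.card _ (fun k => fw A B ((B.sort (· ≤ ·)).getD k 0))
      (fun i => rfl)]
    calc (Multiset.range B.card).map (fun k => fw A B ((B.sort (· ≤ ·)).getD k 0))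
        = (Multiset.range (B.sort (· ≤ ·)).length).map
            (fun k => fw A B ((B.sort (· ≤ ·)).getD k 0)) := by rw [hlenB]
      _ = ((B.sort (· ≤ ·)).map (fw A B) : List ℕ) := map_range_getD _ _
      _ = Multiset.map (fw A B) ((B.sort (· ≤ ·)) : Multiset ℕ) :=
          (Multiset.map_coe _ _).symm
      _ = B.val.map (fw A B) := by rw [hvalB]
  have h2 : (Finset.Icc 1 A.card).val.map (fun i => mu (A.card - i + 1) + (A.card - i))
      = A.val.map (fw A B) := by
    have step1 : (Finset.Icc 1 A.card).val.map
          (fun i => mu (A.card - i + 1) + (A.card - i))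
        = (Finset.Icc 1 A.card).val.map
            (fun i => fw A B ((A.sort (· ≤ ·)).getD (A.card - i) 0)) := by
      apply Multiset.map_congr rfl
      intro i hi
      simp only [Finset.mem_val, Finset.mem_Icc] at hi
      have hj1 : 1 ≤ A.card - i + 1 := by omega
      have hj2 : A.card - i + 1 ≤ A.card := by omega
      have hjj : A.card - i + 1 - 1 = A.card - i := by omega
      rw [hmu (A.card - i + 1) hj1 hj2, hjj]
      unfold fw
      have hr : (A.filter (· < (A.sort (· ≤ ·)).getD (A.card - i) 0)).card
          = A.card - i :=
        card_filter_sort_lt A (A.card - i) (by omega)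
      rw [hr]
      have hcf : (B.filter
          (fun y => (A.sort (· ≤ ·)).getD (A.card - i) 0 < y)).card
          = (B.filter ((A.sort (· ≤ ·)).getD (A.card - i) 0 < ·)).card := rfl
      rw [hcf]
      omega
    rw [step1, icc_map_rev' A.card _ (fun k => fw A B ((A.sort (· ≤ ·)).getD k 0))
      (fun i => rfl)]
    calc (Multiset.range A.card).map (fun k => fw A B ((A.sort (· ≤ ·)).getD k 0))
        = (Multiset.range (A.sort (· ≤ ·)).length).map
            (fun k => fw A B ((A.sort (· ≤ ·)).getD k 0)) := by rw [hlenA]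
      _ = ((A.sort (· ≤ ·)).map (fw A B) : List ℕ) := map_range_getD _ _
      _ = Multiset.map (fw A B) ((A.sort (· ≤ ·)) : Multiset ℕ) :=
          (Multiset.map_coe _ _).symm
      _ = A.val.map (fw A B) := by rw [hvalA]
  rw [h1, h2]
  have E := key n A B hdisj hunion
  have haM : A.card ∈ (Finset.Icc 1 A.card).val + B.val.map (fw A B) := by
    rw [Multiset.mem_add]
    exact Or.inl (by rw [Finset.mem_val, Finset.mem_Icc]; omega)
  have hbN : B.card ∈ (Finset.Icc 1 B.card).val + A.val.map (fw A B) := by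
    rw [Multiset.mem_add]
    exact Or.inl (by rw [Finset.mem_val, Finset.mem_Icc]; omega)
  have h : ({A.card} + {B.card} : Multiset ℕ)
        + ((Finset.Icc 1 A.card).val + B.val.map (fw A B)).erase A.card
      = ({A.card} + {B.card} : Multiset ℕ)
        + ((Finset.Icc 1 B.card).val + A.val.map (fw A B)).erase B.card := by
    calc ({A.card} + {B.card} : Multiset ℕ)
          + ((Finset.Icc 1 A.card).val + B.val.map (fw A B)).erase A.card
        = (A.card ::ₘ ((Finset.Icc 1 A.card).val + B.val.map (fw A B)).erase A.card)
            + {B.card} := by rw [← Multiset.singleton_add]; abel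
      _ = ((Finset.Icc 1 A.card).val + B.val.map (fw A B)) + {B.card} := by
          rw [Multiset.cons_erase haM]
      _ = ((Finset.Icc 1 B.card).val + A.val.map (fw A B)) + {A.card} := E
      _ = (B.card ::ₘ ((Finset.Icc 1 B.card).val + A.val.map (fw A B)).erase B.card)
            + {A.card} := by rw [Multiset.cons_erase hbN]
      _ = ({A.card} + {B.card} : Multiset ℕ)
            + ((Finset.Icc 1 B.card).val + A.val.map (fw A B)).erase B.card := by
          rw [← Multiset.singleton_add]; abel
  exact add_left_cancel h
end

section
/- Let τ ∈ S_n be a permutation with increasing runs of lengths ρ_r, ..., ρ_1, ρ_0 (read left to right), let (w_i) be its 0-schedule numbers and, for 1 ≤ l ≤ r, let (w^{(l)}(c)) be its l-schedule numbers. Then the multiset {w^{(l)}(c) : 1 ≤ c ≤ n} equals the multiset ({w_i : 1 ≤ i ≤ n} ∪ {ρ_l}) minus one copy of ρ_0. -/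
/-- Positions (1-indexed, in the one-line notation of a permutation of `{1,…,n}`)
of the `(k+1)`-st-from-last increasing run, where the runs have lengths
`ρ r, …, ρ 1, ρ 0` from left to right (so run `k = 0` is the last run). -/
def runPos (n : ℕ) (ρ : ℕ → ℕ) (k : ℕ) : Finset ℕ :=
  Finset.Icc (n + 1 - ∑ j ∈ Finset.range (k + 1), ρ j) (n - ∑ j ∈ Finset.range k, ρ j)

/-- The run index (counted from the last run, `0` = last run) of position `p`. -/
def runIdxOf (n r : ℕ) (ρ : ℕ → ℕ) (p : ℕ) : ℕ :=
  ((Finset.range (r + 1)).filter (fun m => ∑ j ∈ Finset.range (m + 1), ρ j ≤ n - p)).card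

/-- The `l`-schedule number `w^{(l)}(c)` of the value `c` for a permutation whose
one-line notation is `τ` (position `p` holds value `τ p`), with inverse `τinv`,
and run lengths `ρ r, …, ρ 0`. If `c` lies in one of the last `l` runs it is
`#(elements < c in c's run) + #(elements > c in the previous run)`; if `c` lies in
the `(l+1)`-st from last run it is the number of elements weakly to the right of `c`
in that run; otherwise it is
`#(elements > c in c's run) + #(elements < c in the next run)`. -/
def sched (n r : ℕ) (ρ τ τinv : ℕ → ℕ) (l c : ℕ) : ℕ :=
  let p := τinv c
  let k := runIdxOf n r ρ p
  if k < l then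
    ((runPos n ρ k).filter (fun p' => τ p' < c)).card
      + ((runPos n ρ (k + 1)).filter (fun p' => c < τ p')).card
  else if k = l then
    ((runPos n ρ k).filter (fun p' => p ≤ p')).card
  else
    ((runPos n ρ k).filter (fun p' => c < τ p')).card
      + ((runPos n ρ (k - 1)).filter (fun p' => τ p' < c)).card

/-!
Passing from the `(l-1)`- to the `l`-schedule changes the schedule numbers only on the
consecutive runs `L` (run `l`, counting from the last run `0`) and `R` (run `l - 1`). With
`w = pairSched L R`, i.e. `w c = #{x ∈ R | x < c} + #{x ∈ L | c < x}`, the values `1, …, |R|`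
on `R` are replaced by `w`, and the values `w` on `L` by `1, …, |L|`. The two-run identity
`{w c | c ∈ R} + {0, …, |L| - 1} = {w c | c ∈ L} + {0, …, |R| - 1}`, proved by removing the
largest element of `L ∪ R`, says that this step adds `ρ l` and removes `ρ (l - 1)`; the steps
telescope.
-/

open Finset

theorem Multiset.range_add_one_eq_cons_map (n : ℕ) :
    range (n + 1) = 0 ::ₘ (range n).map (· + 1) := by
  rw [← coe_range, List.range_succ_eq_map]
  rfl

lemma Icc_one_val_add_singleton_zero (m : ℕ) :
    (Icc 1 m).val + {0} = Multiset.range m + {m} := by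
  rw [add_comm, Multiset.singleton_add, add_comm, Multiset.singleton_add, ← Multiset.range_succ,
    ← range_val, ← insert_val_of_notMem (by simp)]
  congr 1
  ext x
  simp only [mem_insert, mem_Icc, mem_range]
  omega

lemma map_val_Icc_const_sub (a b : ℕ) :
    (Icc a b).val.map (fun p => b + 1 - p) = (Icc 1 (b + 1 - a)).val := by
  rw [← image_val_of_injOn fun x hx y hy _ => by simp only [coe_Icc, Set.mem_Icc] at hx hy; omega]
  congr 1
  ext x
  simp only [mem_image, mem_Icc]
  constructor
  · rintro ⟨p, hp, rfl⟩
    omega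
  · intro hx
    exact ⟨b + 1 - x, by omega, by omega⟩

section PairSched

variable {α : Type*} [LinearOrder α]

def pairSched (L R : Finset α) (c : α) : ℕ := #{x ∈ R | x < c} + #{x ∈ L | c < x}

variable {L R : Finset α} {b c : α}

lemma pairSched_insert_right_of_le (hc : c ≤ b) :
    pairSched L (insert b R) c = pairSched L R c := by
  rw [pairSched, pairSched, filter_insert, if_neg hc.not_gt]

lemma pairSched_insert_left_of_lt (hb : b ∉ L) (hc : c < b) :
    pairSched (insert b L) R c = pairSched L R c + 1 := by
  rw [pairSched, pairSched, filter_insert, if_pos hc,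
    card_insert_of_notMem fun h => hb (mem_filter.1 h).1, add_assoc]

lemma pairSched_of_lt_of_le (hR : ∀ x ∈ R, x < b) (hL : ∀ x ∈ L, x ≤ b) :
    pairSched L R b = #R := by
  rw [pairSched, filter_true_of_mem hR, filter_false_of_mem fun x hx => (hL x hx).not_gt,
    card_empty, add_zero]

lemma map_pairSched_insert_right (hb : ∀ x ∈ L ∪ R, x < b)
    (ih : R.val.map (pairSched L R) + .range #L = L.val.map (pairSched L R) + .range #R) :
    (insert b R).val.map (pairSched L (insert b R)) + .range #L
      = L.val.map (pairSched L (insert b R)) + .range #(insert b R) := by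
  have hbR : b ∉ R := fun h => lt_irrefl b (hb b (mem_union_right L h))
  have hlt : ∀ x ∈ L ∪ R, pairSched L (insert b R) x = pairSched L R x :=
    fun x hx => pairSched_insert_right_of_le (hb x hx).le
  rw [insert_val_of_notMem hbR, card_insert_of_notMem hbR, Multiset.map_cons,
    pairSched_insert_right_of_le le_rfl,
    pairSched_of_lt_of_le (fun x hx => hb x (mem_union_right L hx))
      (fun x hx => (hb x (mem_union_left R hx)).le),
    Multiset.map_congr rfl fun x hx => hlt x (mem_union_right L hx),
    Multiset.map_congr rfl fun x hx => hlt x (mem_union_left R hx),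
    Multiset.cons_add, ih, Multiset.range_succ, Multiset.add_cons]

lemma map_pairSched_insert_left (hb : ∀ x ∈ L ∪ R, x < b)
    (ih : R.val.map (pairSched L R) + .range #L = L.val.map (pairSched L R) + .range #R) :
    R.val.map (pairSched (insert b L) R) + .range #(insert b L)
      = (insert b L).val.map (pairSched (insert b L) R) + .range #R := by
  have hbL : b ∉ L := fun h => lt_irrefl b (hb b (mem_union_left R h))
  have hlt : ∀ x ∈ L ∪ R, pairSched (insert b L) R x = pairSched L R x + 1 :=
    fun x hx => pairSched_insert_left_of_lt hbL (hb x hx)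
  rw [insert_val_of_notMem hbL, card_insert_of_notMem hbL, Multiset.map_cons,
    pairSched_of_lt_of_le (fun x hx => hb x (mem_union_right L hx))
      fun x hx => (mem_insert.1 hx).elim le_of_eq fun h => (hb x (mem_union_left R h)).le,
    Multiset.map_congr rfl fun x hx => hlt x (mem_union_right L hx),
    Multiset.map_congr rfl fun x hx => hlt x (mem_union_left R hx),
    Multiset.cons_add, ← Multiset.add_cons, ← Multiset.range_succ,
    Multiset.range_add_one_eq_cons_map, Multiset.range_add_one_eq_cons_map,
    Multiset.add_cons, Multiset.add_cons]
  congr 1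
  simpa only [Multiset.map_add, Multiset.map_map, Function.comp_def]
    using congrArg (Multiset.map (· + 1)) ih

theorem map_pairSched_add_range (hLR : Disjoint L R) :
    R.val.map (pairSched L R) + .range #L = L.val.map (pairSched L R) + .range #R := by
  suffices ∀ s : Finset α, ∀ L R : Finset α, Disjoint L R → L ∪ R = s →
      R.val.map (pairSched L R) + .range #L = L.val.map (pairSched L R) + .range #R from
    this _ L R hLR rfl
  intro s
  induction s using Finset.induction_on_max with
  | empty =>
    intro L R _ hs
    obtain ⟨rfl, rfl⟩ := union_eq_empty.1 hs
    rfl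
  | insert b s hb ih =>
    intro L R hLR hs
    have hbs : b ∉ s := fun h => lt_irrefl b (hb b h)
    rcases mem_union.1 (hs ▸ mem_insert_self b s) with hbL | hbR
    · have hs' : L.erase b ∪ R = s := by
        rw [← erase_insert hbs, ← hs, erase_union_distrib,
          erase_eq_of_notMem (disjoint_left.1 hLR hbL)]
      rw [← insert_erase hbL]
      exact map_pairSched_insert_left (hs' ▸ hb)
        (ih _ _ (hLR.mono_left (erase_subset b L)) hs')
    · have hs' : L ∪ R.erase b = s := by
        rw [← erase_insert hbs, ← hs, erase_union_distrib,
          erase_eq_of_notMem (disjoint_right.1 hLR hbR)]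
      rw [← insert_erase hbR]
      exact map_pairSched_insert_right (hs' ▸ hb)
        (ih _ _ (hLR.mono_right (erase_subset b R)) hs')

theorem map_pairSched_add_Icc (hLR : Disjoint L R) :
    R.val.map (pairSched L R) + (Icc 1 #L).val + {#R}
      = L.val.map (pairSched L R) + (Icc 1 #R).val + {#L} := by
  apply add_right_cancel (b := ({0} : Multiset ℕ))
  calc R.val.map (pairSched L R) + (Icc 1 #L).val + {#R} + {0}
      = R.val.map (pairSched L R) + ((Icc 1 #L).val + {0}) + {#R} := by abel
    _ = (R.val.map (pairSched L R) + .range #L) + {#L} + {#R} := by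
      rw [Icc_one_val_add_singleton_zero]; abel
    _ = (L.val.map (pairSched L R) + .range #R) + {#L} + {#R} := by
      rw [map_pairSched_add_range hLR]
    _ = L.val.map (pairSched L R) + ((Icc 1 #R).val + {0}) + {#L} := by
      rw [Icc_one_val_add_singleton_zero]; abel
    _ = L.val.map (pairSched L R) + (Icc 1 #R).val + {#L} + {0} := by abel

end PairSched

section Permutation

variable {n : ℕ} {τ τinv : ℕ → ℕ}

lemma injOn_Icc_of_leftInv (hinv : ∀ p, 1 ≤ p → p ≤ n → τinv (τ p) = p) :
    Set.InjOn τ (Icc 1 n) :=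
  Set.LeftInvOn.injOn (f₁' := τinv) fun p hp => hinv p (mem_Icc.1 hp).1 (mem_Icc.1 hp).2

lemma map_val_Icc_of_leftInv (hτmem : ∀ p, 1 ≤ p → p ≤ n → τ p ∈ Icc 1 n)
    (hinv : ∀ p, 1 ≤ p → p ≤ n → τinv (τ p) = p) :
    (Icc 1 n).val.map τ = (Icc 1 n).val := by
  rw [← image_val_of_injOn (injOn_Icc_of_leftInv hinv)]
  congr 1
  refine eq_of_subset_of_card_le (image_subset_iff.2 fun p hp => ?_)
    (card_image_of_injOn (injOn_Icc_of_leftInv hinv)).ge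
  exact hτmem p (mem_Icc.1 hp).1 (mem_Icc.1 hp).2

end Permutation

section Runs

variable {n r k p : ℕ} {ρ : ℕ → ℕ} (hsum : ∑ j ∈ range (r + 1), ρ j = n)
include hsum

lemma sum_range_le_of_le (hk : k ≤ r + 1) : ∑ j ∈ range k, ρ j ≤ n :=
  hsum ▸ sum_le_sum_of_subset (range_subset_range.2 hk)

lemma mem_runPos_iff (hk : k ≤ r) :
    p ∈ runPos n ρ k ↔ ∑ j ∈ range k, ρ j + p ≤ n ∧ n < ∑ j ∈ range (k + 1), ρ j + p := by
  have := sum_range_le_of_le hsum (Nat.add_le_add_right hk 1)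
  rw [runPos, mem_Icc]
  omega

lemma runPos_subset_Icc (hk : k ≤ r) : runPos n ρ k ⊆ Icc 1 n := by
  intro p hp
  have := sum_range_le_of_le hsum (Nat.add_le_add_right hk 1)
  rw [mem_runPos_iff hsum hk] at hp
  rw [mem_Icc]
  omega

lemma card_runPos (hk : k ≤ r) : #(runPos n ρ k) = ρ k := by
  have := sum_range_le_of_le hsum (Nat.add_le_add_right hk 1)
  rw [sum_range_succ] at this
  rw [runPos, Nat.card_Icc, sum_range_succ]
  omega

lemma runIdxOf_eq_of_mem_runPos (hk : k ≤ r) (hp : p ∈ runPos n ρ k) :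
    runIdxOf n r ρ p = k := by
  rw [mem_runPos_iff hsum hk] at hp
  have hmono {i j : ℕ} (h : i ≤ j) : ∑ x ∈ range i, ρ x ≤ ∑ x ∈ range j, ρ x :=
    sum_le_sum_of_subset (range_subset_range.2 h)
  suffices {m ∈ range (r + 1) | ∑ j ∈ range (m + 1), ρ j ≤ n - p} = range k by
    rw [runIdxOf, this, card_range]
  ext m
  simp only [mem_filter, mem_range]
  constructor
  · rintro ⟨-, hm⟩
    by_contra! hkm
    have := hmono (Nat.add_le_add_right hkm 1)
    omega
  · intro hm
    have := hmono (show m + 1 ≤ k from hm)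
    omega

lemma sum_runPos_val : ∑ k ∈ range (r + 1), (runPos n ρ k).val = (Icc 1 n).val := by
  suffices ∀ t ≤ r + 1, ∑ k ∈ range t, (runPos n ρ k).val
      = (Icc (n + 1 - ∑ j ∈ range t, ρ j) n).val by
    rw [this (r + 1) le_rfl, hsum, Nat.add_sub_cancel_left]
  intro t ht
  induction t with
  | zero => simp
  | succ t ih =>
    have hle := sum_range_le_of_le hsum ht
    have hdisj : Disjoint (Icc (n + 1 - ∑ j ∈ range t, ρ j) n) (runPos n ρ t) := by
      rw [disjoint_left]
      intro x hx hx'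
      rw [mem_Icc] at hx
      rw [mem_runPos_iff hsum (by omega)] at hx'
      omega
    rw [sum_range_succ, ih (by omega), ← disjUnion_val _ _ hdisj]
    congr 1
    ext x
    rw [mem_disjUnion, mem_runPos_iff hsum (by omega), mem_Icc, mem_Icc]
    rw [sum_range_succ] at hle ⊢
    omega

section Schedules

variable {l : ℕ} {τ τinv : ℕ → ℕ} (hinv : ∀ p, 1 ≤ p → p ≤ n → τinv (τ p) = p)
include hinv

def runVals (n : ℕ) (ρ τ : ℕ → ℕ) (k : ℕ) : Finset ℕ := (runPos n ρ k).image τ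

lemma injOn_runPos (hk : k ≤ r) : Set.InjOn τ (runPos n ρ k) :=
  (injOn_Icc_of_leftInv hinv).mono (coe_subset.2 (runPos_subset_Icc hsum hk))

lemma card_runVals (hk : k ≤ r) : #(runVals n ρ τ k) = ρ k := by
  rw [runVals, card_image_of_injOn (injOn_runPos hsum hinv hk), card_runPos hsum hk]

lemma map_val_runVals (hk : k ≤ r) (f : ℕ → ℕ) :
    (runVals n ρ τ k).val.map f = (runPos n ρ k).val.map (fun p => f (τ p)) := by
  rw [runVals, image_val_of_injOn (injOn_runPos hsum hinv hk), Multiset.map_map]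
  rfl

lemma disjoint_runVals_succ (hk : k + 1 ≤ r) :
    Disjoint (runVals n ρ τ (k + 1)) (runVals n ρ τ k) := by
  rw [disjoint_left]
  rintro _ hc hc'
  obtain ⟨p, hp, rfl⟩ := mem_image.1 hc
  obtain ⟨q, hq, hqp⟩ := mem_image.1 hc'
  obtain rfl : q = p := injOn_Icc_of_leftInv hinv (runPos_subset_Icc hsum (by omega) hq)
    (runPos_subset_Icc hsum hk hp) hqp
  have := (runIdxOf_eq_of_mem_runPos hsum hk hp).symm.trans
    (runIdxOf_eq_of_mem_runPos hsum (by omega) hq)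
  omega

lemma card_filter_runPos (hk : k ≤ r) (P : ℕ → Prop) [DecidablePred P] :
    #{p ∈ runPos n ρ k | P (τ p)} = #{c ∈ runVals n ρ τ k | P c} := by
  rw [runVals, filter_image,
    card_image_of_injOn ((injOn_runPos hsum hinv hk).mono (coe_subset.2 (filter_subset _ _)))]

lemma sched_of_lt (hk : k + 1 ≤ r) (hkl : k < l) (hp : p ∈ runPos n ρ k) :
    sched n r ρ τ τinv l (τ p) = pairSched (runVals n ρ τ (k + 1)) (runVals n ρ τ k) (τ p) := by
  obtain ⟨hp₁, hp₂⟩ := mem_Icc.1 (runPos_subset_Icc hsum (by omega) hp)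
  simp only [sched, hinv p hp₁ hp₂, runIdxOf_eq_of_mem_runPos hsum (by omega) hp, if_pos hkl]
  rw [card_filter_runPos hsum hinv (by omega) (· < τ p),
    card_filter_runPos hsum hinv hk (τ p < ·), pairSched]

lemma sched_of_gt (hk : k ≤ r) (hkl : l < k) (hp : p ∈ runPos n ρ k) :
    sched n r ρ τ τinv l (τ p) = pairSched (runVals n ρ τ k) (runVals n ρ τ (k - 1)) (τ p) := by
  obtain ⟨hp₁, hp₂⟩ := mem_Icc.1 (runPos_subset_Icc hsum hk hp)
  simp only [sched, hinv p hp₁ hp₂, runIdxOf_eq_of_mem_runPos hsum hk hp,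
    if_neg (by omega : ¬k < l), if_neg (by omega : k ≠ l)]
  rw [card_filter_runPos hsum hinv hk (τ p < ·),
    card_filter_runPos hsum hinv (by omega) (· < τ p), pairSched, add_comm]

lemma map_sched_runPos_self (hl : l ≤ r) :
    (runPos n ρ l).val.map (fun p => sched n r ρ τ τinv l (τ p)) = (Icc 1 (ρ l)).val := by
  have hle := sum_range_le_of_le hsum (Nat.add_le_add_right hl 1)
  rw [sum_range_succ] at hle
  have hsched : ∀ p ∈ runPos n ρ l,
      sched n r ρ τ τinv l (τ p) = n - ∑ j ∈ range l, ρ j + 1 - p := by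
    intro p hp
    obtain ⟨hp₁, hp₂⟩ := mem_Icc.1 (runPos_subset_Icc hsum hl hp)
    simp only [sched, hinv p hp₁ hp₂, runIdxOf_eq_of_mem_runPos hsum hl hp, lt_irrefl,
      if_false, if_true]
    rw [runPos, mem_Icc] at hp
    rw [← Nat.card_Icc, runPos]
    congr 1
    ext x
    simp only [mem_filter, mem_Icc]
    omega
  rw [Multiset.map_congr rfl hsched, runPos, map_val_Icc_const_sub, sum_range_succ]
  congr 2
  omega

section Telescoping

variable {m : ℕ} (hτmem : ∀ p, 1 ≤ p → p ≤ n → τ p ∈ Icc 1 n)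
include hτmem

lemma map_sched_eq_sum_runPos (l : ℕ) :
    (Icc 1 n).val.map (sched n r ρ τ τinv l)
      = ∑ k ∈ range (r + 1), (runPos n ρ k).val.map (fun p => sched n r ρ τ τinv l (τ p)) := by
  rw [← map_val_Icc_of_leftInv hτmem hinv, Multiset.map_map, ← sum_runPos_val hsum]
  exact map_sum (Multiset.mapAddMonoidHom _) _ _

lemma map_sched_succ_add_singleton (hm : m + 1 ≤ r) :
    (Icc 1 n).val.map (sched n r ρ τ τinv (m + 1)) + {ρ m}
      = (Icc 1 n).val.map (sched n r ρ τ τinv m) + {ρ (m + 1)} := by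
  set T := fun l k => (runPos n ρ k).val.map (fun p => sched n r ρ τ τinv l (τ p))
  have hsplit (l : ℕ) : (Icc 1 n).val.map (sched n r ρ τ τinv l)
      = ∑ k ∈ range (r + 1) \ {m, m + 1}, T l k + (T l m + T l (m + 1)) := by
    have hsub : {m, m + 1} ⊆ range (r + 1) := by
      intro k hk
      rw [mem_insert, mem_singleton] at hk
      rw [mem_range]
      omega
    rw [map_sched_eq_sum_runPos hsum hinv hτmem, ← sum_sdiff hsub, sum_pair (by omega)]
  have hrest : ∑ k ∈ range (r + 1) \ {m, m + 1}, T (m + 1) k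
      = ∑ k ∈ range (r + 1) \ {m, m + 1}, T m k := by
    refine sum_congr rfl fun k hk => Multiset.map_congr rfl fun p hp => ?_
    simp only [mem_sdiff, mem_range, mem_insert, mem_singleton, not_or] at hk
    rcases lt_or_gt_of_ne hk.2.1 with h | h
    · rw [sched_of_lt hsum hinv (by omega) (by omega) hp, sched_of_lt hsum hinv (by omega) h hp]
    · rw [sched_of_gt hsum hinv (by omega) (by omega) hp, sched_of_gt hsum hinv (by omega) h hp]
  have hdown : T (m + 1) m
      = (runVals n ρ τ m).val.map (pairSched (runVals n ρ τ (m + 1)) (runVals n ρ τ m)) := by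
    rw [map_val_runVals hsum hinv (by omega)]
    exact Multiset.map_congr rfl fun p hp => sched_of_lt hsum hinv hm (by omega) hp
  have hup : T m (m + 1)
      = (runVals n ρ τ (m + 1)).val.map (pairSched (runVals n ρ τ (m + 1)) (runVals n ρ τ m)) := by
    rw [map_val_runVals hsum hinv hm]
    exact Multiset.map_congr rfl fun p hp => sched_of_gt hsum hinv hm (by omega) hp
  have hself {l : ℕ} (hl : l ≤ r) : T l l = (Icc 1 (ρ l)).val :=
    map_sched_runPos_self hsum hinv hl
  have htwo := map_pairSched_add_Icc (disjoint_runVals_succ hsum hinv hm)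
  rw [card_runVals hsum hinv hm, card_runVals hsum hinv (by omega)] at htwo
  rw [hsplit, hsplit, hrest, hdown, hup, hself hm, hself (by omega), add_assoc, htwo]
  abel

lemma map_sched_add_singleton (hl : l ≤ r) :
    (Icc 1 n).val.map (sched n r ρ τ τinv l) + {ρ 0}
      = (Icc 1 n).val.map (sched n r ρ τ τinv 0) + {ρ l} := by
  induction l with
  | zero => rfl
  | succ m ih =>
    apply add_right_cancel (b := {ρ m})
    rw [add_right_comm, map_sched_succ_add_singleton hsum hinv hτmem hl, add_right_comm,
      ih (by omega), add_right_comm]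

end Telescoping

end Schedules

end Runs

theorem stmt_9_general (n r : ℕ) (ρ τ τinv : ℕ → ℕ) (l : ℕ) (hlr : l ≤ r)
    (hsum : ∑ k ∈ Finset.range (r + 1), ρ k = n)
    (hτmem : ∀ p, 1 ≤ p → p ≤ n → τ p ∈ Finset.Icc 1 n)
    (hinv : ∀ p, 1 ≤ p → p ≤ n → τinv (τ p) = p)
    :
    Multiset.map (sched n r ρ τ τinv l) (Finset.Icc 1 n).val
      = (Multiset.map (sched n r ρ τ τinv 0) (Finset.Icc 1 n).val + {ρ l}).erase (ρ 0) := by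
  rw [← map_sched_add_singleton hsum hinv hτmem hlr, add_comm, Multiset.singleton_add,
    Multiset.erase_cons_head]

/-- For a permutation `τ ∈ S_n` with runs of lengths `ρ r, …, ρ 1, ρ 0`
and `1 ≤ l ≤ r`, the multiset of `l`-schedule numbers equals the multiset of
`0`-schedule numbers with one copy of `ρ l` added and one copy of `ρ 0` removed. -/
theorem stmt_9 (n r : ℕ) (ρ τ τinv : ℕ → ℕ) (l : ℕ) (hl : 1 ≤ l) (hlr : l ≤ r)
    (hρpos : ∀ k, k ≤ r → 0 < ρ k)
    (hsum : ∑ k ∈ Finset.range (r + 1), ρ k = n)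
    (hτmem : ∀ p, 1 ≤ p → p ≤ n → τ p ∈ Finset.Icc 1 n)
    (hinv : ∀ p, 1 ≤ p → p ≤ n → τinv (τ p) = p)
    (hinv' : ∀ c, 1 ≤ c → c ≤ n → τinv c ∈ Finset.Icc 1 n ∧ τ (τinv c) = c)
    (hincr : ∀ p, 1 ≤ p → p + 1 ≤ n →
        runIdxOf n r ρ p = runIdxOf n r ρ (p + 1) → τ p < τ (p + 1))
    (hdesc : ∀ p, 1 ≤ p → p + 1 ≤ n →
        runIdxOf n r ρ p ≠ runIdxOf n r ρ (p + 1) → τ (p + 1) < τ p)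
    :
    Multiset.map (sched n r ρ τ τinv l) (Finset.Icc 1 n).val
      = (Multiset.map (sched n r ρ τ τinv 0) (Finset.Icc 1 n).val + {ρ l}).erase (ρ 0) :=
  stmt_9_general n r ρ τ τinv l hlr hsum hτmem hinv
end

section
/- With E_{n,k} defined by e_n[X(1−z)/(1−q)] = Σ_{k=1}^n ((z;q)_k/(q;q)_k) E_{n,k}[X], one has the identity (−1)^{n−1} p_n = Σ_{k=1}^{n} ([n]_q/[k]_q) E_{n,k} in the ring of symmetric functions over ℚ(q), where p_n is the n-th power sum symmetric function and [m]_q = (1−q^m)/(1−q). -/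
/-!
Both sides of the defining expansion vanish at `z = 1`. Lift them to polynomials in `z`, divide
by `1 - z` and set `z = 1`. On the left, Newton's recursion shows that only the term
`(-1)^(n-1) p_n / n` of `e_n` survives, giving `(-1)^(n-1) p_n / (1 - q^n)`; on the right,
`(z;q)_k / ((1 - z) (q;q)_k)` becomes `1 / (1 - q^k)`. Multiplying by `1 - q^n` gives the
identity, as `[n]_q / [k]_q = (1 - q^n) / (1 - q^k)`.
-/

open MvPolynomial

/-- The elementary symmetric function `e_n`, expressed in the ring of symmetric
functions over `K`, realized as the polynomial ring `K[p_1, p_2, …]` in the power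
sums (`X i` stands for `p_{i+1}`), via Newton's identity
`e_n = (1/n) Σ_{i=0}^{n-1} (−1)^i p_{i+1} e_{n−1−i}`. -/
noncomputable def eP (K : Type*) [Field K] : ℕ → MvPolynomial ℕ K := fun n =>
  Nat.strongRecOn n (fun n ih =>
    if h : n = 0 then 1
    else C ((n : K))⁻¹ * ∑ i ∈ Finset.range n,
      (-1 : MvPolynomial ℕ K) ^ i * (X i * ih (n - 1 - i) (by omega)))

open scoped Polynomial
open Finset

theorem eP_zero (K : Type*) [Field K] : eP K 0 = 1 := by
  rw [eP, Nat.strongRecOn_eq]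
  rfl

theorem eP_of_ne_zero (K : Type*) [Field K] {n : ℕ} (hn : n ≠ 0) :
    eP K n = C ((n : K))⁻¹ * ∑ i ∈ range n, (-1) ^ i * (X i * eP K (n - 1 - i)) := by
  rw [eP, Nat.strongRecOn_eq, dif_neg hn]
  rfl

theorem RatFunc.X_pow_ne_one {L : Type*} [Field L] {m : ℕ} (hm : m ≠ 0) :
    (RatFunc.X : RatFunc L) ^ m ≠ 1 := by
  rw [← RatFunc.algebraMap_X, ← map_pow, ← map_one (algebraMap L[X] (RatFunc L)),
    (RatFunc.algebraMap_injective L).ne_iff, ← sub_ne_zero, ← Polynomial.C_1]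
  exact Polynomial.X_pow_sub_C_ne_zero (Nat.pos_of_ne_zero hm) 1

section qPochhammer
variable {R S : Type*} [CommRing R] [CommRing S]

def qPochhammer (a q : R) (k : ℕ) : R := ∏ i ∈ range k, (1 - a * q ^ i)

theorem qPochhammer_succ (a q : R) (k : ℕ) :
    qPochhammer a q (k + 1) = qPochhammer a q k * (1 - a * q ^ k) :=
  prod_range_succ _ k

theorem qPochhammer_succ' (a q : R) (k : ℕ) :
    qPochhammer a q (k + 1) = (1 - a) * qPochhammer (a * q) q k := by
  simp only [qPochhammer, prod_range_succ', pow_succ, pow_zero, mul_one, mul_assoc, mul_comm]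

theorem map_qPochhammer (f : R →+* S) (a q : R) (k : ℕ) :
    f (qPochhammer a q k) = qPochhammer (f a) (f q) k := by
  simp [qPochhammer]

theorem qPochhammer_self_ne_zero {K : Type*} [Field K] {q : K} (hq : ∀ m ≠ 0, q ^ m ≠ 1)
    (k : ℕ) : qPochhammer q q k ≠ 0 :=
  prod_ne_zero_iff.2 fun i _ => by
    rw [← pow_succ', sub_ne_zero]
    exact (hq _ i.succ_ne_zero).symm

end qPochhammer

section CofactorAtOne
variable {K σ : Type*} [Field K]

/-- `r` is the value at `z = 1` of `f / (1 - z)`, the quotient being polynomial in `z`. -/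
def CofactorAtOne (f : MvPolynomial σ (RatFunc K)) (r : MvPolynomial σ K) : Prop :=
  ∃ P : MvPolynomial σ K[X], f = C (1 - RatFunc.X) * map (algebraMap K[X] (RatFunc K)) P ∧
    map (Polynomial.evalRingHom 1) P = r

namespace CofactorAtOne
variable {f g : MvPolynomial σ (RatFunc K)} {r s : MvPolynomial σ K}

theorem unique (hr : CofactorAtOne f r) (hs : CofactorAtOne f s) : r = s := by
  obtain ⟨P, hfP, rfl⟩ := hr
  obtain ⟨Q, hfQ, rfl⟩ := hs
  have hz : (C (1 - RatFunc.X) : MvPolynomial σ (RatFunc K)) ≠ 0 := by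
    rw [Ne, C_eq_zero, sub_eq_zero, eq_comm, ← pow_one RatFunc.X]
    exact RatFunc.X_pow_ne_one one_ne_zero
  rw [map_injective _ (RatFunc.algebraMap_injective K) (mul_left_cancel₀ hz (hfP.symm.trans hfQ))]

theorem exists_map_eq (h : CofactorAtOne f r) :
    ∃ Q : MvPolynomial σ K[X], f = map (algebraMap K[X] (RatFunc K)) Q ∧
      map (Polynomial.evalRingHom 1) Q = 0 := by
  obtain ⟨P, rfl, -⟩ := h
  refine ⟨C (1 - Polynomial.X) * P, ?_, ?_⟩ <;> simp

theorem add (hf : CofactorAtOne f r) (hg : CofactorAtOne g s) : CofactorAtOne (f + g) (r + s) := by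
  obtain ⟨P, rfl, rfl⟩ := hf
  obtain ⟨Q, rfl, rfl⟩ := hg
  exact ⟨P + Q, by simp [mul_add], by simp⟩

theorem zero : CofactorAtOne (0 : MvPolynomial σ (RatFunc K)) 0 := ⟨0, by simp, by simp⟩

theorem sum {ι : Type*} (s : Finset ι) {f : ι → MvPolynomial σ (RatFunc K)}
    {r : ι → MvPolynomial σ K} (h : ∀ i ∈ s, CofactorAtOne (f i) (r i)) :
    CofactorAtOne (∑ i ∈ s, f i) (∑ i ∈ s, r i) := by
  classical
  induction s using Finset.induction_on with
  | empty => simpa using zero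
  | insert i s hi ih =>
    rw [sum_insert hi, sum_insert hi]
    exact (h i (mem_insert_self i s)).add (ih fun j hj => h j (mem_insert_of_mem hj))

theorem mul_left (Q : MvPolynomial σ K[X]) (h : CofactorAtOne f r) :
    CofactorAtOne (map (algebraMap K[X] (RatFunc K)) Q * f)
      (map (Polynomial.evalRingHom 1) Q * r) := by
  obtain ⟨P, rfl, rfl⟩ := h
  exact ⟨Q * P, by simp only [map_mul]; ring, by simp⟩

theorem mul_right (h : CofactorAtOne f r) (Q : MvPolynomial σ K[X]) :
    CofactorAtOne (f * map (algebraMap K[X] (RatFunc K)) Q)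
      (r * map (Polynomial.evalRingHom 1) Q) := by
  simpa only [mul_comm] using h.mul_left Q

end CofactorAtOne

theorem cofactorAtOne_C_mul_map (a : K[X]) (p : MvPolynomial σ K) :
    CofactorAtOne
      (C ((1 - RatFunc.X) * algebraMap K[X] (RatFunc K) a) * map (algebraMap K (RatFunc K)) p)
      (C (a.eval 1) * p) := by
  refine ⟨C a * map Polynomial.C p, ?_, ?_⟩
  · rw [C_mul, mul_assoc, map_mul, map_C, MvPolynomial.map_map, ← Polynomial.algebraMap_eq,
      ← IsScalarTower.algebraMap_eq]
  · rw [map_mul, map_C, MvPolynomial.map_map,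
      show (Polynomial.evalRingHom 1).comp Polynomial.C = RingHom.id K
        from RingHom.ext fun _ => Polynomial.eval_C, map_id, Polynomial.coe_evalRingHom]

end CofactorAtOne

section GarsiaHaglund
variable {K : Type*} [Field K]

-- `p_{m+1} ↦ p_{m+1}[X(1 - z)/(1 - q)] = p_{m+1} (1 - z^(m+1)) / (1 - q^(m+1))`
noncomputable def plethysticSubst (q : K) (m : ℕ) : MvPolynomial ℕ (RatFunc K) :=
  C ((1 - RatFunc.X ^ (m + 1)) / (1 - algebraMap K (RatFunc K) q ^ (m + 1))) * X m

theorem cofactorAtOne_plethysticSubst (q : K) (m : ℕ) :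
    CofactorAtOne (plethysticSubst q m) (C ((m + 1 : K) * (1 - q ^ (m + 1))⁻¹) * X m) := by
  let a : K[X] := (∑ j ∈ range (m + 1), Polynomial.X ^ j) * Polynomial.C (1 - q ^ (m + 1))⁻¹
  have key : (1 - RatFunc.X ^ (m + 1)) / (1 - algebraMap K (RatFunc K) q ^ (m + 1))
      = (1 - RatFunc.X) * algebraMap K[X] (RatFunc K) a := by
    simp only [a, map_mul, map_sum, map_pow, RatFunc.algebraMap_X, RatFunc.algebraMap_C,
      map_inv₀, map_sub, map_one, RatFunc.algebraMap_eq_C]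
    rw [← mul_assoc, mul_neg_geom_sum, div_eq_mul_inv]
  have ha : a.eval 1 = (m + 1 : K) * (1 - q ^ (m + 1))⁻¹ := by
    simp [a, Polynomial.eval_finsetSum]
  have h := cofactorAtOne_C_mul_map a (X m : MvPolynomial ℕ K)
  rwa [map_X, ← key, ha] at h

theorem cofactorAtOne_aeval_eP [CharZero K] (q : K) {n : ℕ} (hn : n ≠ 0) :
    CofactorAtOne (aeval (plethysticSubst q) (eP (RatFunc K) n))
      (C ((-1) ^ (n - 1) * (1 - q ^ n)⁻¹) * X (n - 1)) := by
  induction n using Nat.strong_induction_on with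
  | _ n ih =>
  obtain ⟨m, rfl⟩ := Nat.exists_eq_succ_of_ne_zero hn
  have hterm : ∀ i ∈ range (m + 1), CofactorAtOne
      ((-1) ^ i * (plethysticSubst q i * aeval (plethysticSubst q) (eP (RatFunc K) (m - i))))
      ((-1) ^ i * (C ((i + 1 : K) * (1 - q ^ (i + 1))⁻¹) * X i * if i = m then 1 else 0)) := by
    intro i hi
    -- for `i < m` the factor coming from `e_(m-i)` vanishes at `z = 1` as well
    obtain ⟨Q, hQ, hQ1⟩ : ∃ Q : MvPolynomial ℕ K[X],
        aeval (plethysticSubst q) (eP (RatFunc K) (m - i)) = map (algebraMap K[X] (RatFunc K)) Q ∧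
          map (Polynomial.evalRingHom 1) Q = if i = m then 1 else 0 := by
      split_ifs with him
      · exact ⟨1, by rw [him, Nat.sub_self, eP_zero, map_one, map_one], map_one _⟩
      · have := mem_range.1 hi
        exact (ih (m - i) (by omega) (by omega)).exists_map_eq
    rw [hQ]
    simpa [hQ1] using ((cofactorAtOne_plethysticSubst q i).mul_right Q).mul_left ((-1) ^ i)
  rw [eP_of_ne_zero _ hn, map_mul, aeval_C, map_sum]
  simp only [map_mul, map_pow, map_neg, map_one, aeval_X]
  convert (CofactorAtOne.sum _ hterm).mul_left (C (Polynomial.C ((m + 1 : K))⁻¹)) using 1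
  · simp
  · have hm : (C ((m + 1 : K))⁻¹ : MvPolynomial ℕ K) * C ((m : K) + 1) = 1 := by
      rw [← C_mul, inv_mul_cancel₀ (by exact_mod_cast m.succ_ne_zero), C_1]
    simp only [map_C, Polynomial.coe_evalRingHom, Polynomial.eval_C, mul_ite, mul_one, mul_zero,
      sum_ite_eq', mem_range, lt_add_one, if_true, Nat.succ_sub_one, C_mul]
    linear_combination (-(-1) ^ m * C (1 - q ^ (m + 1))⁻¹ * X m) * hm

theorem cofactorAtOne_qPochhammer_div_mul {q : K} (hq : ∀ m ≠ 0, q ^ m ≠ 1) (k : ℕ)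
    (p : MvPolynomial ℕ K) :
    CofactorAtOne
      (C (qPochhammer RatFunc.X (algebraMap K (RatFunc K) q) (k + 1)
          / qPochhammer (algebraMap K (RatFunc K) q) (algebraMap K (RatFunc K) q) (k + 1))
        * map (algebraMap K (RatFunc K)) p)
      (C (1 - q ^ (k + 1))⁻¹ * p) := by
  let P : K[X] := qPochhammer (Polynomial.X * Polynomial.C q) (Polynomial.C q) k
  have hP : algebraMap K[X] (RatFunc K) P
      = qPochhammer (RatFunc.X * RatFunc.C q) (RatFunc.C q) k := by
    rw [map_qPochhammer, map_mul, RatFunc.algebraMap_X, RatFunc.algebraMap_C]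
  have hP1 : P.eval 1 = qPochhammer q q k := by
    rw [← Polynomial.coe_evalRingHom, map_qPochhammer]
    simp
  let a : K[X] := P * Polynomial.C (qPochhammer q q (k + 1))⁻¹
  have key : qPochhammer RatFunc.X (algebraMap K (RatFunc K) q) (k + 1)
        / qPochhammer (algebraMap K (RatFunc K) q) (algebraMap K (RatFunc K) q) (k + 1)
      = (1 - RatFunc.X) * algebraMap K[X] (RatFunc K) a := by
    rw [qPochhammer_succ' RatFunc.X, ← map_qPochhammer, map_mul, hP, RatFunc.algebraMap_C,
      RatFunc.algebraMap_eq_C, map_inv₀, div_eq_mul_inv, mul_assoc]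
  have ha : a.eval 1 = (1 - q ^ (k + 1))⁻¹ := by
    rw [Polynomial.eval_mul, Polynomial.eval_C, hP1, qPochhammer_succ, ← pow_succ', mul_inv]
    exact mul_inv_cancel_left₀ (qPochhammer_self_ne_zero hq k) _
  have h := cofactorAtOne_C_mul_map a p
  rwa [← key, ha] at h

theorem neg_one_pow_mul_X_eq_sum_of_eP_expansion [CharZero K] {q : K}
    (hq : ∀ m ≠ 0, q ^ m ≠ 1) {n : ℕ} (E : ℕ → MvPolynomial ℕ K)
    (hE : aeval (plethysticSubst q) (eP (RatFunc K) n) = ∑ k ∈ Icc 1 n,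
      C (qPochhammer RatFunc.X (algebraMap K (RatFunc K) q) k
          / qPochhammer (algebraMap K (RatFunc K) q) (algebraMap K (RatFunc K) q) k)
        * (E k).map (algebraMap K (RatFunc K))) :
    (-1 : MvPolynomial ℕ K) ^ (n - 1) * X (n - 1)
      = ∑ k ∈ Icc 1 n, C ((∑ i ∈ range n, q ^ i) / ∑ i ∈ range k, q ^ i) * E k := by
  obtain rfl | hn := eq_or_ne n 0
  · -- `e_0 = 1` has no such expansion: `hE` reads `1 = 0`
    simp [eP_zero] at hE
  have hright : CofactorAtOne (aeval (plethysticSubst q) (eP (RatFunc K) n))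
      (∑ k ∈ Icc 1 n, C (1 - q ^ k)⁻¹ * E k) := by
    rw [hE]
    refine CofactorAtOne.sum _ fun k hk => ?_
    obtain ⟨j, rfl⟩ := Nat.exists_eq_add_of_le' (mem_Icc.1 hk).1
    exact cofactorAtOne_qPochhammer_div_mul hq j (E (j + 1))
  have h := (cofactorAtOne_aeval_eP q hn).unique hright
  have hq1 : q - 1 ≠ 0 := sub_ne_zero.2 (by simpa using hq 1 one_ne_zero)
  have hqn : 1 - q ^ n ≠ 0 := sub_ne_zero.2 (hq n hn).symm
  calc (-1 : MvPolynomial ℕ K) ^ (n - 1) * X (n - 1)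
      = C (1 - q ^ n) * (C ((-1) ^ (n - 1) * (1 - q ^ n)⁻¹) * X (n - 1)) := by
        rw [← mul_assoc, ← C_mul, mul_left_comm, mul_inv_cancel₀ hqn, mul_one, map_pow,
          map_neg, map_one]
    _ = ∑ k ∈ Icc 1 n, C ((1 - q ^ n) * (1 - q ^ k)⁻¹) * E k := by
        rw [h, mul_sum]
        exact sum_congr rfl fun k _ => by rw [C_mul, mul_assoc]
    _ = ∑ k ∈ Icc 1 n, C ((∑ i ∈ range n, q ^ i) / ∑ i ∈ range k, q ^ i) * E k := by
        refine sum_congr rfl fun k _ => ?_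
        rw [geom_sum_eq (sub_ne_zero.1 hq1), geom_sum_eq (sub_ne_zero.1 hq1),
          div_div_div_cancel_right₀ hq1, ← neg_sub 1 (q ^ n), ← neg_sub 1 (q ^ k),
          neg_div_neg_eq, div_eq_mul_inv]

end GarsiaHaglund

theorem stmt_16_general (n : ℕ)
    (E : ℕ → MvPolynomial ℕ (RatFunc ℚ))
    (hE : letI K := RatFunc ℚ
      letI F := RatFunc K
      letI q : F := algebraMap K F RatFunc.X
      letI z : F := RatFunc.X
      aeval (fun m => (C ((1 - z ^ (m + 1)) / (1 - q ^ (m + 1))) * X m : MvPolynomial ℕ F))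
          (eP F n)
        = ∑ k ∈ Finset.Icc 1 n,
            C ((∏ i ∈ Finset.range k, (1 - z * q ^ i))
                / (∏ i ∈ Finset.range k, (1 - q * q ^ i)))
              * (E k).map (algebraMap K F)) :
    (-1 : MvPolynomial ℕ (RatFunc ℚ)) ^ (n - 1) * X (n - 1)
      = ∑ k ∈ Finset.Icc 1 n,
          C ((∑ i ∈ Finset.range n, (RatFunc.X : RatFunc ℚ) ^ i)
              / (∑ i ∈ Finset.range k, (RatFunc.X : RatFunc ℚ) ^ i))
            * E k :=
  neg_one_pow_mul_X_eq_sum_of_eP_expansion (fun _ => RatFunc.X_pow_ne_one) E hE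

/-- Garsia–Haglund identity. In the ring of symmetric functions
over `K = ℚ(q)`, realized as `K[p_1, p_2, …]` (`X i` is the power sum `p_{i+1}`), if
`E 1, …, E n` satisfy the defining expansion
`e_n[X(1−z)/(1−q)] = Σ_{k=1}^{n} ((z;q)_k/(q;q)_k) E k` in `ℚ(q)(z)[p_1, p_2, …]`,
then `(−1)^(n−1) p_n = Σ_{k=1}^{n} ([n]_q/[k]_q) E k`. -/
theorem stmt_16 (n : ℕ) (hn : 1 ≤ n)
    (E : ℕ → MvPolynomial ℕ (RatFunc ℚ))
    (hE : letI K := RatFunc ℚ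
      letI F := RatFunc K
      letI q : F := algebraMap K F RatFunc.X
      letI z : F := RatFunc.X
      aeval (fun m => (C ((1 - z ^ (m + 1)) / (1 - q ^ (m + 1))) * X m : MvPolynomial ℕ F))
          (eP F n)
        = ∑ k ∈ Finset.Icc 1 n,
            C ((∏ i ∈ Finset.range k, (1 - z * q ^ i))
                / (∏ i ∈ Finset.range k, (1 - q * q ^ i)))
              * (E k).map (algebraMap K F)) :
    (-1 : MvPolynomial ℕ (RatFunc ℚ)) ^ (n - 1) * X (n - 1)
      = ∑ k ∈ Finset.Icc 1 n,
          C ((∑ i ∈ Finset.range n, (RatFunc.X : RatFunc ℚ) ^ i)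
              / (∑ i ∈ Finset.range k, (RatFunc.X : RatFunc ℚ) ^ i))
            * E k :=
  stmt_16_general n E hE
end
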